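/- Let D+ be a canonical positive Boolean automaton double-cycle with left cycle of size n and right cycle of size m (f_c(x) = x^ℓ_{n-1} ∧ x^r_{m-1}, all other automata copy their predecessor). For any configuration x containing at least one automaton at state 1 in the left cycle and at least one at state 1 in the right cycle, there exists a sequence of at most 2(n+m)-5 asynchronous single-automaton updates transforming x into the all-ones configuration (1^n, 1^m). -/

import Mathlib

/-!
A 1 in a cycle spreads forward, one update per cell, up to the last cell of the cycle. If `c` is
at 1, spreading it around both cycles takes `n + m - 2` updates. Otherwise some 1 sits off `c` in
each cycle; spreading both to the last cells makes `f_c = 1`, one update of `c` sets it to 1, and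
spreading that 1 up to the cells where those two 1s started fills everything, `n + m - 3`
updates in all. Both counts are within `2 (n + m) - 5` (a truncated subtraction when `n = m = 1`).
-/

/-- A configuration of a Boolean automaton double-cycle with cycles of sizes `n`
and `m`: the shared automaton `c` is index 0 of both cycles (so valid
configurations satisfy `x.1 0 = x.2 0`). -/
abbrev Cfg (n m : ℕ) := (Fin n → Bool) × (Fin m → Bool)

/-- One asynchronous single-automaton update in a double-cycle whose shared
automaton `c` computes `fc`; every non-shared automaton copies its predecessor. -/
inductive Step {n m : ℕ} (fc : Cfg n m → Bool) : Cfg n m → Cfg n m → Prop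
  | left (x : Cfg n m) (i : Fin n) (hi : 1 ≤ i.val) :
      Step fc x (Function.update x.1 i (x.1 ⟨i.val - 1, by have := i.isLt; omega⟩), x.2)
  | right (x : Cfg n m) (j : Fin m) (hj : 1 ≤ j.val) :
      Step fc x (x.1, Function.update x.2 j (x.2 ⟨j.val - 1, by have := j.isLt; omega⟩))
  | center (x : Cfg n m) (i : Fin n) (j : Fin m) (hi : i.val = 0) (hj : j.val = 0) :
      Step fc x (Function.update x.1 i (fc x), Function.update x.2 j (fc x))

/-- `Steps fc k x y`: configuration `y` is obtained from `x` by exactly `k`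
asynchronous single-automaton updates. -/
def Steps {n m : ℕ} (fc : Cfg n m → Bool) : ℕ → Cfg n m → Cfg n m → Prop
  | 0, x, y => x = y
  | k + 1, x, y => ∃ z, Step fc x z ∧ Steps fc k z y

def fillIcc {k : ℕ} (f : Fin k → Bool) (a b : ℕ) : Fin k → Bool :=
  fun i => f i || decide (a ≤ i.val ∧ i.val ≤ b)

@[simp]
theorem fillIcc_apply {k : ℕ} (f : Fin k → Bool) (a b : ℕ) (i : Fin k) :
    fillIcc f a b i = (f i || decide (a ≤ i.val ∧ i.val ≤ b)) :=
  rfl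

theorem fillIcc_self {k : ℕ} (f : Fin k → Bool) (i : Fin k) (hi : f i = true) :
    fillIcc f i i = f := by
  funext j
  simp only [fillIcc_apply, Bool.or_eq_left_iff_imp, decide_eq_true_eq]
  intro h
  rwa [Fin.ext (le_antisymm h.2 h.1)]

theorem fillIcc_succ {k : ℕ} (f : Fin k → Bool) {a b : ℕ} (hab : a ≤ b + 1) (hb : b + 1 < k) :
    fillIcc f a (b + 1) = Function.update (fillIcc f a b) ⟨b + 1, hb⟩ true := by
  funext i
  by_cases hi : i = ⟨b + 1, hb⟩
  · subst hi
    simp [hab]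
  · have hi' : i.val ≠ b + 1 := fun h => hi (Fin.ext h)
    simp only [fillIcc_apply, Function.update_of_ne hi]
    congr 2
    exact propext (and_congr_right fun _ => by omega)

theorem Step.swap {n m : ℕ} {fc : Cfg n m → Bool} {x y : Cfg n m} (h : Step fc x y) :
    Step (fc ∘ Prod.swap) x.swap y.swap := by
  cases h with
  | left i hi => exact Step.right x.swap i hi
  | right j hj => exact Step.left x.swap j hj
  | center i j hi hj => exact Step.center x.swap j i hj hi

namespace Steps

variable {n m : ℕ} {fc : Cfg n m → Bool}

theorem trans {k l : ℕ} {x y z : Cfg n m} (hxy : Steps fc k x y) (hyz : Steps fc l y z) :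
    Steps fc (k + l) x z := by
  induction k generalizing x with
  | zero => cases hxy; simpa using hyz
  | succ k ih =>
    obtain ⟨w, hxw, hwy⟩ := hxy
    rw [Nat.succ_add]
    exact ⟨w, hxw, ih hwy⟩

theorem single {x y : Cfg n m} (h : Step fc x y) : Steps fc 1 x y :=
  ⟨y, h, rfl⟩

theorem swap {k : ℕ} {x y : Cfg n m} (h : Steps fc k x y) :
    Steps (fc ∘ Prod.swap) k x.swap y.swap := by
  induction k generalizing x with
  | zero => exact congrArg Prod.swap h
  | succ k ih =>
    obtain ⟨z, hxz, hzy⟩ := h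
    exact ⟨z.swap, hxz.swap, ih hzy⟩

theorem fillIcc_left {x : Cfg n m} (i : Fin n) (hi : x.1 i = true) {b : ℕ} (hib : i.val ≤ b)
    (hb : b < n) : Steps fc (b - i) x (fillIcc x.1 i b, x.2) := by
  obtain ⟨d, rfl⟩ := Nat.exists_eq_add_of_le hib
  rw [Nat.add_sub_cancel_left]
  induction d with
  | zero => simp only [add_zero, fillIcc_self x.1 i hi]; rfl
  | succ d ih =>
    refine (ih (by omega) (by omega)).trans (single ?_)
    convert Step.left (fc := fc) (fillIcc x.1 i (i + d), x.2) ⟨i + d + 1, hb⟩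
      (Nat.le_add_left 1 _) using 2
    rw [← add_assoc, fillIcc_succ x.1 (by omega : i.val ≤ i + d + 1) hb]
    simp

theorem fillIcc_right {x : Cfg n m} (j : Fin m) (hj : x.2 j = true) {c : ℕ} (hjc : j.val ≤ c)
    (hc : c < m) : Steps fc (c - j) x (x.1, fillIcc x.2 j c) :=
  (fillIcc_left (fc := fc ∘ Prod.swap) (x := x.swap) j hj hjc hc).swap

theorem fillIcc_left_right {x : Cfg n m} (i : Fin n) (j : Fin m) (hi : x.1 i = true)
    (hj : x.2 j = true) {b c : ℕ} (hib : i.val ≤ b) (hb : b < n) (hjc : j.val ≤ c) (hc : c < m) :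
    Steps fc ((b - i) + (c - j)) x (fillIcc x.1 i b, fillIcc x.2 j c) :=
  (fillIcc_left i hi hib hb).trans (fillIcc_right (x := (fillIcc x.1 i b, x.2)) j hj hjc hc)

end Steps

/-- In a canonical positive double-cycle, any configuration with at least one
automaton at state 1 in each cycle reaches the all-ones configuration in at most
2(n+m)-5 asynchronous updates. -/
theorem stmt8 (n m : ℕ) (hn : 0 < n) (hm : 0 < m) (x : Cfg n m)
    (hshare : x.1 ⟨0, hn⟩ = x.2 ⟨0, hm⟩)
    (hones : (∃ i, x.1 i = true) ∧ (∃ j, x.2 j = true)) :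
    ∃ k ≤ 2 * (n + m) - 5,
      Steps (fun y : Cfg n m => y.1 ⟨n - 1, by omega⟩ && y.2 ⟨m - 1, by omega⟩)
        k x ((fun _ => true, fun _ => true) : Cfg n m) := by
  set fc : Cfg n m → Bool := fun y => y.1 ⟨n - 1, by omega⟩ && y.2 ⟨m - 1, by omega⟩
  by_cases hc : x.1 ⟨0, hn⟩ = true
  · refine ⟨(n - 1 - 0) + (m - 1 - 0), by omega, ?_⟩
    convert Steps.fillIcc_left_right (fc := fc) ⟨0, hn⟩ ⟨0, hm⟩ hc (hshare ▸ hc)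
      (b := n - 1) (c := m - 1) (Nat.zero_le _) (by omega) (Nat.zero_le _) (by omega) using 2 <;>
    · funext i
      simp
      omega
  · obtain ⟨⟨i, hi⟩, ⟨j, hj⟩⟩ := hones
    have hi0 : 1 ≤ i.val :=
      Nat.one_le_iff_ne_zero.2 fun h => hc (by rwa [show i = ⟨0, hn⟩ from Fin.ext h] at hi)
    have hj0 : 1 ≤ j.val :=
      Nat.one_le_iff_ne_zero.2 fun h => hc (by rwa [hshare, ← show j = ⟨0, hm⟩ from Fin.ext h])
    have toEnds := Steps.fillIcc_left_right (fc := fc) i j hi hj (b := n - 1) (c := m - 1)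
      (by omega) (by omega) (by omega) (by omega)
    set y : Cfg n m := (fillIcc x.1 i (n - 1), fillIcc x.2 j (m - 1))
    have hy : fc y = true := by simp [fc, y]; omega
    set z : Cfg n m := (Function.update y.1 ⟨0, hn⟩ true, Function.update y.2 ⟨0, hm⟩ true)
    have center : Steps fc 1 y z := by
      have := Step.center (fc := fc) y ⟨0, hn⟩ ⟨0, hm⟩ rfl rfl
      rw [hy] at this
      exact Steps.single this
    have fromCenter := Steps.fillIcc_left_right (fc := fc) (x := z) ⟨0, hn⟩ ⟨0, hm⟩
      (by simp [z]) (by simp [z]) (b := i - 1) (c := j - 1) (Nat.zero_le _) (by omega)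
      (Nat.zero_le _) (by omega)
    refine ⟨n - 1 - i + (m - 1 - j) + 1 + (i - 1 - 0 + (j - 1 - 0)), by omega, ?_⟩
    convert (toEnds.trans center).trans fromCenter using 2 <;>
    · funext l
      simp [z, y, Function.update_apply]
      omega
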